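/- arXiv:2104.12104 — 3 statements merged into one kernel-verified Lean document; each statement's English description precedes it below -/
import Mathlib

section
/- Let (X,d) be a metric space and T : X → X. For all x, y ∈ X and n ∈ ℕ with n ≥ 1, the Feldman–Katok metric satisfies d_{FK_n}(x,y) ≤ (d̄_n(x,y))^{1/2}, where d̄_n is the mean metric. -/
/-!
Matching each time `i < n` with `d(Tⁱx, Tⁱy) < δ` to itself is an `(n,δ)`-match, so by
Markov's inequality `f̄_{n,δ}(x,y) ≤ d̄_n(x,y) / δ`. Any `δ > √(d̄_n(x,y))` therefore
satisfies `f̄_{n,δ}(x,y) < δ`, which bounds `d_{FK_n}(x,y)` by `δ`.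
-/

open Filter Metric Set

variable {X : Type*} [MetricSpace X]

/-- The maximal cardinality of an `(n,δ)`-match of `x` and `y`: an order-preserving
bijection `π : D(π) → R(π)` between subsets of `{0,…,n-1}` such that
`d(T^i x, T^{π i} y) < δ` for all `i ∈ D(π)`, encoded by a pair of strictly
increasing enumerations of `D(π)` and `R(π)`. -/
noncomputable def fkFit (T : X → X) (n : ℕ) (δ : ℝ) (x y : X) : ℕ :=
  sSup {k : ℕ | ∃ i j : Fin k → Fin n, StrictMono i ∧ StrictMono j ∧
    ∀ s, dist (T^[(i s : ℕ)] x) (T^[(j s : ℕ)] y) < δ}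

/-- `f̄_{n,δ}(x,y) = 1 - (max match)/n`. -/
noncomputable def fkF (T : X → X) (n : ℕ) (δ : ℝ) (x y : X) : ℝ :=
  1 - (fkFit T n δ x y : ℝ) / n

/-- The Feldman–Katok metric `d_{FK_n}`. -/
noncomputable def dFKn (T : X → X) (n : ℕ) (x y : X) : ℝ :=
  sInf {δ : ℝ | 0 < δ ∧ fkF T n δ x y < δ}

/-- The Feldman–Katok pseudometric `d_{FK}`. -/
noncomputable def dFK (T : X → X) (x y : X) : ℝ :=
  sInf {δ : ℝ | 0 < δ ∧ Filter.limsup (fun n => fkF T n δ x y) atTop < δ}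

open Finset in
theorem Finset.card_filter_le_nsmul_le_sum {ι M : Type*} [AddCommMonoid M] [PartialOrder M]
    [IsOrderedAddMonoid M] (s : Finset ι) (f : ι → M) (hf : ∀ i ∈ s, 0 ≤ f i) (a : M)
    [DecidablePred fun i => a ≤ f i] :
    #{i ∈ s | a ≤ f i} • a ≤ ∑ i ∈ s, f i :=
  calc #{i ∈ s | a ≤ f i} • a ≤ ∑ i ∈ s with a ≤ f i, f i :=
        card_nsmul_le_sum _ _ _ fun _ hi => (mem_filter.mp hi).2
    _ ≤ ∑ i ∈ s, f i :=
        sum_le_sum_of_subset_of_nonneg (filter_subset _ _) fun i hi _ => hf i hi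

section FeldmanKatok

variable (T : X → X) {n : ℕ} {δ : ℝ} (x y : X)

theorem bddAbove_matchLengths :
    BddAbove {k : ℕ | ∃ i j : Fin k → Fin n, StrictMono i ∧ StrictMono j ∧
      ∀ s, dist (T^[(i s : ℕ)] x) (T^[(j s : ℕ)] y) < δ} :=
  ⟨n, fun _ ⟨i, _, hi, _, _⟩ => by simpa using Fintype.card_le_of_injective i hi.injective⟩

theorem card_le_fkFit (G : Finset (Fin n))
    (hG : ∀ i ∈ G, dist (T^[(i : ℕ)] x) (T^[(i : ℕ)] y) < δ) :
    G.card ≤ fkFit T n δ x y := by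
  let e := G.orderIsoOfFin rfl
  refine le_csSup (bddAbove_matchLengths T x y) ⟨fun s => e s, fun s => e s, ?_, ?_, ?_⟩
  · exact fun _ _ h => e.strictMono h
  · exact fun _ _ h => e.strictMono h
  · exact fun s => hG _ (e s).2

theorem fkF_le_mean_div (hn : 0 < n) (hδ : 0 < δ) :
    fkF T n δ x y ≤
      ((1 / n : ℝ) * ∑ i ∈ Finset.range n, dist (T^[i] x) (T^[i] y)) / δ := by
  classical
  set d : Fin n → ℝ := fun i => dist (T^[(i : ℕ)] x) (T^[(i : ℕ)] y)
  set far := Finset.univ.filter fun i => δ ≤ d i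
  set near := Finset.univ.filter fun i => ¬ δ ≤ d i
  have hsplit : (far.card : ℝ) + near.card = n := by
    exact_mod_cast (Finset.univ.card_filter_add_card_filter_not fun i => δ ≤ d i).trans
      (Finset.card_fin n)
  have hmarkov : (far.card : ℝ) * δ ≤ ∑ i ∈ Finset.range n, dist (T^[i] x) (T^[i] y) := by
    rw [← Fin.sum_univ_eq_sum_range (fun i => dist (T^[i] x) (T^[i] y)), ← nsmul_eq_mul]
    exact Finset.univ.card_filter_le_nsmul_le_sum d (fun _ _ => dist_nonneg) δ
  have hnear : (near.card : ℝ) ≤ fkFit T n δ x y :=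
    mod_cast card_le_fkFit T x y near fun i hi => not_le.mp (Finset.mem_filter.mp hi).2
  have hn' : (0 : ℝ) < n := mod_cast hn
  calc fkF T n δ x y ≤ 1 - near.card / n := by unfold fkF; gcongr
    _ = far.card / n := by field_simp; linarith
    _ ≤ _ := by
      rw [div_le_div_iff₀ hn' hδ, one_div_mul_eq_div, div_mul_cancel₀ _ hn'.ne']
      linarith

theorem dFKn_le_of_fkF_lt (hδ : 0 < δ) (h : fkF T n δ x y < δ) : dFKn T n x y ≤ δ :=
  csInf_le ⟨0, fun _ ha => ha.1.le⟩ ⟨hδ, h⟩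

end FeldmanKatok

/-- `d_{FK_n}(x,y) ≤ (d̄_n(x,y))^{1/2}` where `d̄_n` is the mean metric. -/
theorem dFKn_le_sqrt_mean (T : X → X) (x y : X) (n : ℕ) (hn : 1 ≤ n) :
    dFKn T n x y ≤
      Real.sqrt ((1 / n : ℝ) * ∑ i ∈ Finset.range n, dist (T^[i] x) (T^[i] y)) := by
  set mean := (1 / n : ℝ) * ∑ i ∈ Finset.range n, dist (T^[i] x) (T^[i] y)
  refine le_of_forall_gt_imp_ge_of_dense fun δ hδ => ?_
  have hδ0 : 0 < δ := (Real.sqrt_nonneg _).trans_lt hδ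
  refine dFKn_le_of_fkF_lt T x y hδ0 ?_
  calc fkF T n δ x y ≤ mean / δ := fkF_le_mean_div T x y hn hδ0
    _ < δ := by
      rw [div_lt_iff₀ hδ0, ← sq]
      exact (Real.sqrt_lt' hδ0).mp hδ
end

section
/- Let (X,d) be a metric space, T : X → X, and n ≥ 1. Then d_{FK_n} is a metric on X: it is nonnegative, symmetric, vanishes exactly when x = y, and satisfies the triangle inequality. -/
/-!
A match of `x` with `y` and a match of `y` with `z` can be composed through the times at which
`y` is used by both; there are at least `k₁ + k₂ - n` of these, and by the triangle inequality
of `d` the composite is a `(δ₁ + δ₂)`-match. Hence `f̄_{n,δ₁+δ₂}(x,z) ≤ f̄_{n,δ₁}(x,y) + f̄_{n,δ₂}(y,z)`,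
and taking infima gives the triangle inequality for `d_{FK_n}`. If `d_{FK_n}(x,y) = 0`, then for
small `δ` we get `f̄_{n,δ}(x,y) < 1/n`, so the match is perfect; a strictly monotone self-map of
`{0,…,n-1}` is the identity, so in particular `d(x,y) < δ`.
-/

open Filter Metric Set

variable {X : Type*} [MetricSpace X]

theorem StrictMono.exists_strictMono_comp_eq {α β γ : Type*} [LinearOrder α] [Preorder β]
    [Preorder γ] {f : α → β} {e : γ → β} (hf : StrictMono f) (he : StrictMono e)
    (hrange : ∀ c, e c ∈ range f) : ∃ φ : γ → α, StrictMono φ ∧ f ∘ φ = e := by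
  choose φ hφ using hrange
  refine ⟨φ, fun s t hst => ?_, funext hφ⟩
  rw [← hf.lt_iff_lt, hφ, hφ]
  exact he hst

namespace FeldmanKatok

variable (T : X → X) (n : ℕ)

/-- Some `(n, δ)`-match of `x` and `y` has `k` elements; `fkFit` is the supremum of such `k`. -/
def HasMatch (δ : ℝ) (x y : X) (k : ℕ) : Prop :=
  ∃ i j : Fin k → Fin n, StrictMono i ∧ StrictMono j ∧
    ∀ s, dist (T^[(i s : ℕ)] x) (T^[(j s : ℕ)] y) < δ

variable {T n}

theorem HasMatch.le {δ : ℝ} {x y : X} {k : ℕ} (h : HasMatch T n δ x y k) : k ≤ n := by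
  obtain ⟨i, -, hi, -⟩ := h
  simpa using Fintype.card_le_of_injective i hi.injective

theorem hasMatch_zero (δ : ℝ) (x y : X) : HasMatch T n δ x y 0 :=
  ⟨Fin.elim0, Fin.elim0, fun s => s.elim0, fun s => s.elim0, fun s => s.elim0⟩

theorem HasMatch.symm {δ : ℝ} {x y : X} {k : ℕ} (h : HasMatch T n δ x y k) :
    HasMatch T n δ y x k := by
  obtain ⟨i, j, hi, hj, hd⟩ := h
  exact ⟨j, i, hj, hi, fun s => dist_comm (T^[i s] x) _ ▸ hd s⟩

theorem hasMatch_self {δ : ℝ} (hδ : 0 < δ) (x : X) : HasMatch T n δ x x n :=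
  ⟨id, id, strictMono_id, strictMono_id, fun s => by simpa using hδ⟩

theorem HasMatch.dist_iterate_lt {δ : ℝ} {x y : X} (h : HasMatch T n δ x y n) (m : Fin n) :
    dist (T^[m] x) (T^[m] y) < δ := by
  obtain ⟨i, j, hi, hj, hd⟩ := h
  simpa only [hi.apply_eq, hj.apply_eq] using hd m

theorem HasMatch.trans {δ₁ δ₂ : ℝ} {x y z : X} {k₁ k₂ : ℕ} (h₁ : HasMatch T n δ₁ x y k₁)
    (h₂ : HasMatch T n δ₂ y z k₂) : ∃ m, k₁ + k₂ ≤ m + n ∧ HasMatch T n (δ₁ + δ₂) x z m := by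
  classical
  obtain ⟨i₁, j₁, hi₁, hj₁, hd₁⟩ := h₁
  obtain ⟨i₂, j₂, hi₂, hj₂, hd₂⟩ := h₂
  set A := Finset.univ.image j₁
  set B := Finset.univ.image i₂
  refine ⟨(A ∩ B).card, ?_, ?_⟩
  · have hA : A.card = k₁ := by simp [A, Finset.card_image_of_injective _ hj₁.injective]
    have hB : B.card = k₂ := by simp [B, Finset.card_image_of_injective _ hi₂.injective]
    have hAB : (A ∪ B).card ≤ n := by simpa using Finset.card_le_univ (A ∪ B)
    have := Finset.card_inter_add_card_union A B
    omega
  · set e := (A ∩ B).orderEmbOfFin rfl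
    have he : ∀ s, e s ∈ A ∩ B := (A ∩ B).orderEmbOfFin_mem rfl
    obtain ⟨φ, hφ, hj₁φ⟩ := hj₁.exists_strictMono_comp_eq e.strictMono fun s => by
      simpa [A] using (Finset.mem_inter.1 (he s)).1
    obtain ⟨ψ, hψ, hi₂ψ⟩ := hi₂.exists_strictMono_comp_eq e.strictMono fun s => by
      simpa [B] using (Finset.mem_inter.1 (he s)).2
    refine ⟨i₁ ∘ φ, j₂ ∘ ψ, hi₁.comp hφ, hj₂.comp hψ, fun s => ?_⟩
    have hmid : j₁ (φ s) = i₂ (ψ s) := (congrFun hj₁φ s).trans (congrFun hi₂ψ s).symm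
    calc dist (T^[i₁ (φ s)] x) (T^[j₂ (ψ s)] z)
        ≤ dist (T^[i₁ (φ s)] x) (T^[j₁ (φ s)] y) + dist (T^[i₂ (ψ s)] y) (T^[j₂ (ψ s)] z) :=
          hmid ▸ dist_triangle _ _ _
      _ < δ₁ + δ₂ := add_lt_add (hd₁ (φ s)) (hd₂ (ψ s))

variable (T n)

theorem hasMatch_fkFit (δ : ℝ) (x y : X) : HasMatch T n δ x y (fkFit T n δ x y) :=
  Nat.sSup_mem ⟨0, hasMatch_zero δ x y⟩ ⟨n, fun _ h => HasMatch.le h⟩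

theorem HasMatch.le_fkFit {δ : ℝ} {x y : X} {k : ℕ} (h : HasMatch T n δ x y k) :
    k ≤ fkFit T n δ x y :=
  le_csSup ⟨n, fun _ h => HasMatch.le h⟩ h

theorem fkFit_le (δ : ℝ) (x y : X) : fkFit T n δ x y ≤ n :=
  (hasMatch_fkFit T n δ x y).le

theorem fkFit_comm (δ : ℝ) (x y : X) : fkFit T n δ x y = fkFit T n δ y x :=
  le_antisymm (hasMatch_fkFit T n δ x y).symm.le_fkFit (hasMatch_fkFit T n δ y x).symm.le_fkFit

theorem fkFit_self {δ : ℝ} (hδ : 0 < δ) (x : X) : fkFit T n δ x x = n :=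
  le_antisymm (fkFit_le T n δ x x) (hasMatch_self hδ x).le_fkFit

theorem fkFit_add_fkFit_le (δ₁ δ₂ : ℝ) (x y z : X) :
    fkFit T n δ₁ x y + fkFit T n δ₂ y z ≤ fkFit T n (δ₁ + δ₂) x z + n := by
  obtain ⟨m, hm, h⟩ := (hasMatch_fkFit T n δ₁ x y).trans (hasMatch_fkFit T n δ₂ y z)
  have := h.le_fkFit
  omega

theorem fkF_comm (δ : ℝ) (x y : X) : fkF T n δ x y = fkF T n δ y x := by
  rw [fkF, fkF, fkFit_comm T n]

theorem fkF_le_one (δ : ℝ) (x y : X) : fkF T n δ x y ≤ 1 := by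
  unfold fkF
  linarith [show (0 : ℝ) ≤ fkFit T n δ x y / n by positivity]

theorem fkF_self (hn : n ≠ 0) {δ : ℝ} (hδ : 0 < δ) (x : X) : fkF T n δ x x = 0 := by
  rw [fkF, fkFit_self T n hδ, div_self (Nat.cast_ne_zero.2 hn), sub_self]

theorem fkF_triangle (δ₁ δ₂ : ℝ) (x y z : X) :
    fkF T n (δ₁ + δ₂) x z ≤ fkF T n δ₁ x y + fkF T n δ₂ y z := by
  have hfit : (fkFit T n δ₁ x y + fkFit T n δ₂ y z : ℝ) ≤ fkFit T n (δ₁ + δ₂) x z + n := by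
    exact_mod_cast fkFit_add_fkFit_le T n δ₁ δ₂ x y z
  have := div_le_div_of_nonneg_right hfit (Nat.cast_nonneg n)
  rw [add_div, add_div] at this
  unfold fkF
  linarith [div_self_le_one (n : ℝ)]

variable {T n}

theorem fkFit_eq_of_fkF_lt {δ : ℝ} {x y : X} (h : fkF T n δ x y < 1 / n) :
    fkFit T n δ x y = n := by
  refine le_antisymm (fkFit_le T n δ x y) ?_
  rcases n.eq_zero_or_pos with rfl | hn
  · exact Nat.zero_le _
  have hn' : (0 : ℝ) < n := Nat.cast_pos.2 hn
  have : (n : ℝ) < fkFit T n δ x y + 1 := by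
    rw [fkF, sub_lt_iff_lt_add, ← add_div, lt_div_iff₀ hn', one_mul] at h
    linarith
  exact Nat.lt_add_one_iff.1 (by exact_mod_cast this)

theorem dist_iterate_lt_of_fkF_lt {δ : ℝ} {x y : X} (h : fkF T n δ x y < 1 / n) (m : Fin n) :
    dist (T^[m] x) (T^[m] y) < δ :=
  (fkFit_eq_of_fkF_lt h ▸ hasMatch_fkFit T n δ x y).dist_iterate_lt m

variable (T n)

theorem bddBelow_dFKn_set (x y : X) : BddBelow {δ : ℝ | 0 < δ ∧ fkF T n δ x y < δ} :=
  ⟨0, fun _ hδ => hδ.1.le⟩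

theorem nonempty_dFKn_set (x y : X) : {δ : ℝ | 0 < δ ∧ fkF T n δ x y < δ}.Nonempty :=
  ⟨2, two_pos, (fkF_le_one T n 2 x y).trans_lt one_lt_two⟩

theorem dFKn_nonneg (x y : X) : 0 ≤ dFKn T n x y :=
  le_csInf (nonempty_dFKn_set T n x y) fun _ hδ => hδ.1.le

theorem dFKn_comm (x y : X) : dFKn T n x y = dFKn T n y x := by
  simp only [dFKn, fkF_comm T n _ x y]

theorem dFKn_self (hn : n ≠ 0) (x : X) : dFKn T n x x = 0 := by
  have : {δ : ℝ | 0 < δ ∧ fkF T n δ x x < δ} = Ioi 0 := by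
    ext δ
    exact ⟨And.left, fun hδ => ⟨hδ, (fkF_self T n hn hδ x).symm ▸ hδ⟩⟩
  rw [dFKn, this, csInf_Ioi]

variable {T n}

theorem eq_of_dFKn_eq_zero (hn : 0 < n) {x y : X} (h : dFKn T n x y = 0) : x = y := by
  refine dist_le_zero.1 (le_of_forall_pos_le_add fun ε hε => ?_)
  have hpos : 0 < min ε (1 / n) := lt_min hε (by positivity)
  obtain ⟨δ, ⟨-, hδF⟩, hδ⟩ := exists_lt_of_csInf_lt (nonempty_dFKn_set T n x y) (h ▸ hpos)
  have := dist_iterate_lt_of_fkF_lt (hδF.trans (hδ.trans_le (min_le_right _ _))) ⟨0, hn⟩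
  simp only [Function.iterate_zero, id] at this
  linarith [min_le_left ε (1 / n)]

variable (T n)

theorem dFKn_triangle (x y z : X) : dFKn T n x z ≤ dFKn T n x y + dFKn T n y z := by
  have hxy := nonempty_dFKn_set T n x y
  have hyz := nonempty_dFKn_set T n y z
  unfold dFKn
  rw [← csInf_add hxy (bddBelow_dFKn_set T n x y) hyz (bddBelow_dFKn_set T n y z)]
  refine csInf_le_csInf (bddBelow_dFKn_set T n x z) (hxy.add hyz) ?_
  rintro _ ⟨δ₁, ⟨hδ₁, hF₁⟩, δ₂, ⟨hδ₂, hF₂⟩, rfl⟩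
  exact ⟨add_pos hδ₁ hδ₂, (fkF_triangle T n δ₁ δ₂ x y z).trans_lt (add_lt_add hF₁ hF₂)⟩

end FeldmanKatok

open FeldmanKatok in
/-- For `n ≥ 1`, `d_{FK_n}` is a metric on `X`: nonnegative, symmetric, vanishing
exactly on the diagonal, and satisfying the triangle inequality. -/
theorem dFKn_is_metric (T : X → X) (n : ℕ) (hn : 1 ≤ n) :
    (∀ x y : X, 0 ≤ dFKn T n x y) ∧
    (∀ x y : X, dFKn T n x y = dFKn T n y x) ∧
    (∀ x y : X, dFKn T n x y = 0 ↔ x = y) ∧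
    (∀ x y z : X, dFKn T n x z ≤ dFKn T n x y + dFKn T n y z) :=
  ⟨dFKn_nonneg T n, dFKn_comm T n,
    fun x _ => ⟨eq_of_dFKn_eq_zero hn, fun h => h ▸ dFKn_self T n (Nat.one_le_iff_ne_zero.1 hn) x⟩,
    dFKn_triangle T n⟩
end

section
/- Let (X,d) be a metric space and T : X → X. For all x,y ∈ X, F(x,y) ≤ 2·d̃_{FK}(x,y), where F is the weak-mean pseudometric and d̃_{FK} is the Feldman–Katok pseudometric without the order-preserving requirement. Assume additionally that d is bounded by 1 (or X has diameter ≤ 1). -/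
open Filter Metric Set

variable {X : Type*} [MetricSpace X]

/-- The maximal cardinality of an `(n,δ)*`-match of `x` and `y`: a not necessarily
order-preserving bijection `π : D(π) → R(π)` between subsets of `{0,…,n-1}` with
`d(T^i x, T^{π i} y) < δ` on its domain, encoded by a pair of injections. -/
noncomputable def wFit (T : X → X) (n : ℕ) (δ : ℝ) (x y : X) : ℕ :=
  sSup {k : ℕ | ∃ i j : Fin k → Fin n, Function.Injective i ∧ Function.Injective j ∧
    ∀ s, dist (T^[(i s : ℕ)] x) (T^[(j s : ℕ)] y) < δ}

/-- `f̃_{n,δ}(x,y) = 1 - (max match)/n`. -/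
noncomputable def wFbar (T : X → X) (n : ℕ) (δ : ℝ) (x y : X) : ℝ :=
  1 - (wFit T n δ x y : ℝ) / n

/-- The Feldman–Katok pseudometric without the order-preserving requirement. -/
noncomputable def dFKt (T : X → X) (x y : X) : ℝ :=
  sInf {δ : ℝ | 0 < δ ∧ Filter.limsup (fun n => wFbar T n δ x y) atTop < δ}

/-- `F_n(x,y) = (1/n) inf_{σ ∈ S_n} ∑_{k<n} d(T^k x, T^{σ k} y)`. -/
noncomputable def weakMeanN (T : X → X) (n : ℕ) (x y : X) : ℝ :=
  (1 / n : ℝ) * ⨅ σ : Equiv.Perm (Fin n),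
    ∑ k : Fin n, dist (T^[(k : ℕ)] x) (T^[(σ k : ℕ)] y)

/-- The weak-mean pseudometric `F(x,y) = limsup_n F_n(x,y)`. -/
noncomputable def weakMean (T : X → X) (x y : X) : ℝ :=
  Filter.limsup (fun n => weakMeanN T n x y) Filter.atTop

/-! Extend an optimal `(n,δ)*`-match to a permutation of `{0,…,n-1}`: matched indices contribute
less than `δ` each and the unmatched ones, a fraction `f̃_{n,δ}` of all, at most `1` each, so
`F_n ≤ δ + f̃_{n,δ}`. Whenever `limsup f̃_{n,δ} < δ` this gives `F ≤ 2δ`; now take the infimum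
over such `δ`. -/

section Matching

variable {α : Type*} [Fintype α] {k : ℕ}

theorem Equiv.Perm.exists_apply_eq_of_injective [DecidableEq α] {i j : Fin k → α}
    (hi : Function.Injective i) (hj : Function.Injective j) :
    ∃ σ : Equiv.Perm α, ∀ s, σ (i s) = j s := by
  let e := (Equiv.ofInjective i hi).symm.trans (Equiv.ofInjective j hj)
  refine ⟨e.extendSubtype, fun s => ?_⟩
  rw [Equiv.extendSubtype_apply_of_mem e (i s) ⟨s, rfl⟩]
  simp [e]

theorem exists_perm_sum_le_of_injective {c : α → α → ℝ} {δ : ℝ} (hc : ∀ a b, c a b ≤ 1)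
    {i j : Fin k → α} (hi : Function.Injective i) (hj : Function.Injective j)
    (hij : ∀ s, c (i s) (j s) ≤ δ) :
    ∃ σ : Equiv.Perm α, ∑ a, c a (σ a) ≤ k * δ + (Fintype.card α - k) := by
  classical
  obtain ⟨σ, hσ⟩ := Equiv.Perm.exists_apply_eq_of_injective hi hj
  refine ⟨σ, ?_⟩
  set A := Finset.univ.image i
  have hA : A.card = k := by simp [A, Finset.card_image_of_injective _ hi]
  have h_matched : ∑ a ∈ A, c a (σ a) ≤ k * δ := by
    rw [Finset.sum_image fun s _ t _ h => hi h]
    simpa [hσ] using Finset.sum_le_sum fun s (_ : s ∈ Finset.univ) => hij s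
  have h_unmatched : ∑ a ∈ Aᶜ, c a (σ a) ≤ Fintype.card α - k := by
    have := Finset.sum_le_card_nsmul Aᶜ (fun a => c a (σ a)) 1 fun a _ => hc a (σ a)
    rw [Finset.card_compl, hA] at this
    have hk : k ≤ Fintype.card α := hA ▸ Finset.card_le_univ A
    simpa [Nat.cast_sub hk] using this
  rw [← Finset.sum_add_sum_compl A]
  exact add_le_add h_matched h_unmatched

end Matching

lemma wFit_mem (T : X → X) (n : ℕ) (δ : ℝ) (x y : X) :
    ∃ i j : Fin (wFit T n δ x y) → Fin n, Function.Injective i ∧ Function.Injective j ∧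
      ∀ s, dist (T^[(i s : ℕ)] x) (T^[(j s : ℕ)] y) < δ := by
  refine Nat.sSup_mem (s := {k : ℕ | ∃ i j : Fin k → Fin n, Function.Injective i ∧
    Function.Injective j ∧ ∀ s, dist (T^[(i s : ℕ)] x) (T^[(j s : ℕ)] y) < δ}) ?_ ?_
  · exact ⟨0, Fin.elim0, Fin.elim0, fun a => a.elim0, fun a => a.elim0, fun s => s.elim0⟩
  · refine ⟨n, fun k ⟨i, _, hi, _⟩ => ?_⟩
    simpa using Fintype.card_le_of_injective i hi

lemma wFit_le (T : X → X) (n : ℕ) (δ : ℝ) (x y : X) : wFit T n δ x y ≤ n := by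
  obtain ⟨i, -, hi, -⟩ := wFit_mem T n δ x y
  simpa using Fintype.card_le_of_injective i hi

lemma wFbar_nonneg (T : X → X) (n : ℕ) (δ : ℝ) (x y : X) : 0 ≤ wFbar T n δ x y := by
  rw [wFbar, sub_nonneg]
  exact div_le_one_of_le₀ (by exact_mod_cast wFit_le T n δ x y) n.cast_nonneg

lemma wFbar_le_one (T : X → X) (n : ℕ) (δ : ℝ) (x y : X) : wFbar T n δ x y ≤ 1 := by
  rw [wFbar, sub_le_self_iff]
  positivity

lemma weakMeanN_nonneg (T : X → X) (n : ℕ) (x y : X) : 0 ≤ weakMeanN T n x y :=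
  mul_nonneg (by positivity) <|
    Real.iInf_nonneg fun _ => Finset.sum_nonneg fun _ _ => dist_nonneg

lemma weakMeanN_le (T : X → X) (n : ℕ) (x y : X) (σ : Equiv.Perm (Fin n)) :
    weakMeanN T n x y ≤ (1 / n : ℝ) * ∑ k : Fin n, dist (T^[(k : ℕ)] x) (T^[(σ k : ℕ)] y) := by
  refine mul_le_mul_of_nonneg_left (ciInf_le ⟨0, ?_⟩ σ) (by positivity)
  rintro _ ⟨τ, rfl⟩
  exact Finset.sum_nonneg fun _ _ => dist_nonneg

lemma weakMeanN_le_add_wFbar (T : X → X) (hd : ∀ a b : X, dist a b ≤ 1) (x y : X) {δ : ℝ}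
    (hδ : 0 ≤ δ) {n : ℕ} (hn : 0 < n) : weakMeanN T n x y ≤ δ + wFbar T n δ x y := by
  obtain ⟨i, j, hi, hj, hij⟩ := wFit_mem T n δ x y
  obtain ⟨σ, hσ⟩ := exists_perm_sum_le_of_injective
    (c := fun a b : Fin n => dist (T^[(a : ℕ)] x) (T^[(b : ℕ)] y)) (fun _ _ => hd _ _) hi hj
    fun s => (hij s).le
  set k := wFit T n δ x y
  have hk : (k : ℝ) ≤ n := by exact_mod_cast wFit_le T n δ x y
  calc weakMeanN T n x y ≤ (1 / n : ℝ) * (k * δ + (n - k)) := by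
        refine (weakMeanN_le T n x y σ).trans (mul_le_mul_of_nonneg_left ?_ (by positivity))
        simpa using hσ
    _ ≤ (1 / n : ℝ) * (n * δ + (n - k)) := by gcongr
    _ = δ + (1 - k / n) := by field_simp

lemma limsup_wFbar_le_one (T : X → X) (δ : ℝ) (x y : X) :
    limsup (fun n => wFbar T n δ x y) atTop ≤ 1 :=
  limsup_le_of_le (isCoboundedUnder_le_of_le atTop fun n => wFbar_nonneg T n δ x y)
    (Eventually.of_forall fun n => wFbar_le_one T n δ x y)

lemma weakMean_le_two_mul_of_limsup_wFbar_lt (T : X → X) (hd : ∀ a b : X, dist a b ≤ 1) (x y : X) {δ : ℝ}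
    (hδ : 0 < δ) (hlim : limsup (fun n => wFbar T n δ x y) atTop < δ) :
    weakMean T x y ≤ 2 * δ := by
  have h_small : ∀ᶠ n in atTop, wFbar T n δ x y < δ :=
    eventually_lt_of_limsup_lt hlim (isBoundedUnder_of ⟨1, fun n => wFbar_le_one T n δ x y⟩)
  refine limsup_le_of_le (isCoboundedUnder_le_of_le atTop fun n => weakMeanN_nonneg T n x y) ?_
  filter_upwards [h_small, eventually_gt_atTop 0] with n h_n hn
  linarith [weakMeanN_le_add_wFbar T hd x y hδ.le hn]

/-- If the metric is bounded by `1`, then `F(x,y) ≤ 2 d̃_{FK}(x,y)`. -/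
theorem weakMean_le_two_dFKt (T : X → X) (hd : ∀ a b : X, dist a b ≤ 1) (x y : X) :
    weakMean T x y ≤ 2 * dFKt T x y := by
  have h_two : (2 : ℝ) ∈ {δ : ℝ | 0 < δ ∧ limsup (fun n => wFbar T n δ x y) atTop < δ} :=
    ⟨two_pos, (limsup_wFbar_le_one T 2 x y).trans_lt one_lt_two⟩
  have : weakMean T x y / 2 ≤ dFKt T x y :=
    le_csInf ⟨2, h_two⟩ fun δ ⟨hδ, hlim⟩ => by linarith [weakMean_le_two_mul_of_limsup_wFbar_lt T hd x y hδ hlim]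
  linarith
end
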